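/- arXiv:2312.16336 — 5 statements merged into one kernel-verified Lean document; each statement's English description precedes it below -/
import Mathlib

section
/- The set of operators {F, G, ∧, ∨} has the short formula property: there exists a polynomial P such that for every finite alphabet Σ and every sample (P,N) of nonempty finite words over Σ, if some LTL(F,G,∧,∨) formula separates P from N, then some LTL(F,G,∧,∨) formula of size at most P(‖P‖ + ‖N‖) separates P from N. Moreover, a separating LTL(F,G,∧,∨) formula exists if and only if no positive word u and negative word v are weak subwords of each other. -/
/-- Syntax of LTL (in negation normal form: negation only on atomic formulas). -/
inductive LTL (σ : Type) : Type
  | top   : LTL σ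
  | bot   : LTL σ
  | atom  : σ → LTL σ
  | natom : σ → LTL σ
  | conj  : LTL σ → LTL σ → LTL σ
  | disj  : LTL σ → LTL σ → LTL σ
  | next  : LTL σ → LTL σ
  | ev    : LTL σ → LTL σ
  | glob  : LTL σ → LTL σ
  | untl  : LTL σ → LTL σ → LTL σ

namespace LTL

variable {σ : Type}

/-- Satisfaction of an LTL formula by a finite word (intended for nonempty words).
`w.drop i` is the suffix of `w` starting at (1-indexed) position `i+1`. -/
def sat : LTL σ → List σ → Prop
  | top, _ => True
  | bot, _ => False
  | atom c, w => w.head? = some c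
  | natom c, w => w ≠ [] ∧ w.head? ≠ some c
  | conj φ ψ, w => sat φ w ∧ sat ψ w
  | disj φ ψ, w => sat φ w ∨ sat ψ w
  | next φ, w => 2 ≤ w.length ∧ sat φ w.tail
  | ev φ, w => ∃ i < w.length, sat φ (w.drop i)
  | glob φ, w => ∀ i < w.length, sat φ (w.drop i)
  | untl φ ψ, w => ∃ i < w.length, sat ψ (w.drop i) ∧ ∀ j < i, sat φ (w.drop j)

/-- Size of a formula: the number of nodes of its syntax tree. -/
def size : LTL σ → ℕ
  | top => 1
  | bot => 1
  | atom _ => 1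
  | natom _ => 2
  | conj φ ψ => size φ + size ψ + 1
  | disj φ ψ => size φ + size ψ + 1
  | next φ => size φ + 1
  | ev φ => size φ + 1
  | glob φ => size φ + 1
  | untl φ ψ => size φ + size ψ + 1

/-- The operators of LTL. -/
inductive Op : Type
  | X | F | G | U | And | Or | Not
  deriving DecidableEq

/-- `φ.usesOnly O`: the formula `φ` is built from atomic formulas (and ⊤, ⊥)
using only operators belonging to the set `O`. -/
def usesOnly : LTL σ → Set Op → Prop
  | top, _ => True
  | bot, _ => True
  | atom _, _ => True
  | natom _, O => Op.Not ∈ O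
  | conj φ ψ, O => Op.And ∈ O ∧ usesOnly φ O ∧ usesOnly ψ O
  | disj φ ψ, O => Op.Or ∈ O ∧ usesOnly φ O ∧ usesOnly ψ O
  | next φ, O => Op.X ∈ O ∧ usesOnly φ O
  | ev φ, O => Op.F ∈ O ∧ usesOnly φ O
  | glob φ, O => Op.G ∈ O ∧ usesOnly φ O
  | untl φ ψ, O => Op.U ∈ O ∧ usesOnly φ O ∧ usesOnly ψ O

/-- `φ.constFree`: the constants ⊤ and ⊥ do not occur in `φ`
(for fragments built from atomic formulas only). -/
def constFree : LTL σ → Prop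
  | top => False
  | bot => False
  | atom _ => True
  | natom _ => True
  | conj φ ψ => constFree φ ∧ constFree ψ
  | disj φ ψ => constFree φ ∧ constFree ψ
  | next φ => constFree φ
  | ev φ => constFree φ
  | glob φ => constFree φ
  | untl φ ψ => constFree φ ∧ constFree ψ

/-- Two formulas are equivalent if exactly the same nonempty finite words satisfy them. -/
def Equiv (φ ψ : LTL σ) : Prop := ∀ w : List σ, w ≠ [] → (sat φ w ↔ sat ψ w)

/-- `φ.Separates P N`: every word of `P` satisfies `φ` and no word of `N` does. -/
def Separates (φ : LTL σ) (P N : Finset (List σ)) : Prop :=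
  (∀ u ∈ P, sat φ u) ∧ (∀ v ∈ N, ¬ sat φ v)

end LTL

/-- `u` is a weak subword of `w`: there are positions `p₁ ≤ ⋯ ≤ p_{|u|}` in `w`
with `u(i) = w(p_i)` for all `i`. -/
def WeakSubword {σ : Type} (u w : List σ) : Prop :=
  ∃ p : Fin u.length → Fin w.length, Monotone p ∧ ∀ i, u.get i = w.get (p i)

namespace LTLSep
open LTL

variable {σ : Type}

/-- Inductive characterization of weak subwords. -/
inductive WS : List σ → List σ → Prop
  | nil (v) : WS [] v
  | skip {u v : List σ} (a : σ) : WS u v → WS u (a :: v)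
  | take {u v : List σ} (a : σ) : WS u (a :: v) → WS (a :: u) (a :: v)

lemma WS.nil_right {u : List σ} (h : WS u []) : u = [] := by cases h; rfl

lemma ws_refl : ∀ u : List σ, WS u u
  | [] => .nil _
  | a :: u => .take a (.skip a (ws_refl u))

lemma WS.tail_left' {u v : List σ} (h : WS u v) :
    ∀ a u', u = a :: u' → WS u' v := by
  induction h with
  | nil => intro a u' h; cases h
  | skip b _ ih => intro a u' h; exact .skip b (ih a u' h)
  | take b h _ => intro a u' h'; cases h'; exact h

lemma WS.tail_left {u v : List σ} {a : σ} (h : WS (a :: u) v) : WS u v :=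
  h.tail_left' a u rfl

lemma WS.drop_left : ∀ (i : ℕ) {u v : List σ}, WS u v → WS (u.drop i) v
  | 0, _, _, h => h
  | _ + 1, [], _, h => h
  | i + 1, _ :: _, _, h => WS.drop_left i h.tail_left

lemma ws_cons_iff {c : σ} {u w : List σ} :
    WS (c :: u) w ↔ ∃ i < w.length, (w.drop i).head? = some c ∧ WS u (w.drop i) := by
  induction w with
  | nil =>
    constructor
    · intro h; cases h
    · rintro ⟨i, hi, -⟩; simp at hi
  | cons a w ih =>
    constructor
    · intro h
      cases h with
      | skip _ h =>
        obtain ⟨i, hi, h1, h2⟩ := ih.1 h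
        exact ⟨i + 1, by simpa using hi, h1, h2⟩
      | take _ h => exact ⟨0, by simp, rfl, h⟩
    · rintro ⟨i, hi, h1, h2⟩
      match i with
      | 0 =>
        simp only [List.drop_zero, List.head?_cons, Option.some.injEq] at h1
        subst h1
        exact .take a h2
      | i + 1 =>
        exact .skip a (ih.2 ⟨i, by simpa using hi, h1, h2⟩)

lemma ws_into_cons_iff {c : σ} {u w : List σ} :
    WS w (c :: u) ↔ ∀ i < w.length, (w.drop i).head? = some c ∨ WS (w.drop i) u := by
  induction w with
  | nil =>
    constructor
    · intro _ i hi; simp at hi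
    · intro _; exact .nil _
  | cons a w ih =>
    constructor
    · intro h i hi
      cases h with
      | skip _ h => exact Or.inr (WS.drop_left i h)
      | take _ h =>
        match i with
        | 0 => exact Or.inl rfl
        | i + 1 => exact ih.1 h i (by simpa using hi)
    · intro h
      rcases h 0 (by simp) with h0 | h0
      · simp only [List.drop_zero, List.head?_cons, Option.some.injEq] at h0
        subst h0
        exact .take a (ih.2 fun i hi => h (i + 1) (by simpa using hi))
      · exact .skip c h0

lemma ws_to_weak {u v : List σ} (h : WS u v) : WeakSubword u v := by
  induction h with
  | nil v => exact ⟨fun i => i.elim0, fun i => i.elim0, fun i => i.elim0⟩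
  | skip a h ih =>
    obtain ⟨p, hm, hg⟩ := ih
    refine ⟨fun i => (p i).succ, fun i j hij => ?_, fun i => ?_⟩
    · simpa [Fin.succ_le_succ_iff] using hm hij
    · simpa using hg i
  | @take u' v' a h ih =>
    obtain ⟨p, hm, hg⟩ := ih
    refine ⟨fun i => if h0 : (i : ℕ) = 0 then ⟨0, Nat.succ_pos _⟩
        else (p ⟨(i : ℕ) - 1, by
          have := i.isLt; simp only [List.length_cons] at this; omega⟩ : Fin _),
        fun i j hij => ?_, fun i => ?_⟩
    · by_cases hi0 : (i : ℕ) = 0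
      · simp only [hi0, dif_pos]
        exact Fin.mk_le_mk.2 (Nat.zero_le _)
      · have hj0 : (j : ℕ) ≠ 0 := by
          have := (Fin.le_def.1 hij); omega
        simp only [hi0, hj0, dif_neg, not_false_iff]
        exact hm (by simp only [Fin.mk_le_mk]; have := Fin.le_def.1 hij; omega)
    · obtain ⟨iv, hlt⟩ := i
      by_cases hi0 : iv = 0
      · subst hi0
        simp only [dif_pos]
        rfl
      · obtain ⟨k, rfl⟩ : ∃ k, iv = k + 1 := ⟨iv - 1, by omega⟩
        have hk' : k < u'.length := by simp only [List.length_cons] at hlt; omega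
        have hgg := hg ⟨k, hk'⟩
        simp only [Fin.val_mk, hi0, dif_neg, not_false_iff, Nat.add_sub_cancel]
        exact hgg

lemma weak_to_ws : ∀ (v u : List σ), WeakSubword u v → WS u v := by
  intro v
  induction v with
  | nil =>
    rintro u ⟨p, -, -⟩
    cases u with
    | nil => exact .nil _
    | cons a u => exact (p ⟨0, by simp⟩).elim0
  | cons b v ihv =>
    intro u
    induction u with
    | nil => intro _; exact .nil _
    | cons a u ihu =>
      rintro ⟨p, hm, hg⟩
      by_cases h0 : ((p ⟨0, by simp⟩ : Fin _) : ℕ) = 0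
      · have hab : a = b := by
          have hgg := hg ⟨0, by simp⟩
          have he : (p ⟨0, by simp⟩ : Fin _) = ⟨0, by simp⟩ := Fin.ext h0
          rw [he] at hgg
          exact hgg
        subst hab
        refine .take a (ihu ⟨fun i => p ⟨(i : ℕ) + 1, by
            have := i.isLt; simp only [List.length_cons]; omega⟩,
          fun i j hij => hm ?_, fun i => ?_⟩)
        · simp only [Fin.mk_le_mk]
          have := Fin.le_def.1 hij; omega
        · exact hg ⟨(i : ℕ) + 1, by have := i.isLt; simp only [List.length_cons]; omega⟩
      · have hpos : ∀ i : Fin (a :: u).length, 0 < ((p i : Fin _) : ℕ) := by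
          intro i
          have h1 : (⟨0, by simp⟩ : Fin (a :: u).length) ≤ i := Fin.mk_le_mk.2 (Nat.zero_le _)
          have := Fin.le_def.1 (hm h1)
          omega
        refine .skip b (ihv (a :: u) ⟨fun i => (⟨((p i : Fin _) : ℕ) - 1, by
            have h2 := (p i).isLt; have h3 := hpos i
            simp only [List.length_cons] at h2; omega⟩ : Fin v.length),
          fun i j hij => ?_, fun i => ?_⟩)
        · simp only [Fin.mk_le_mk]
          have := Fin.le_def.1 (hm hij)
          have := hpos i
          omega
        · have hgg := hg i
          have hpi := hpos i
          obtain ⟨k, hk⟩ : ∃ k, ((p i : Fin _) : ℕ) = k + 1 := ⟨((p i : Fin _) : ℕ) - 1, by omega⟩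
          have he : (p i : Fin _) = ⟨k + 1, by rw [← hk]; exact (p i).isLt⟩ := Fin.ext hk
          rw [he] at hgg
          simp only [hk]
          exact hgg

/-- `Af u` expresses "u is a weak subword of the current word". -/
def Af : List σ → LTL σ
  | [] => .top
  | c :: u => .ev (.conj (.atom c) (Af u))

/-- `Bf u` expresses "the current (nonempty) word is a weak subword of u". -/
def Bf : List σ → LTL σ
  | [] => .bot
  | c :: u => .glob (.disj (.atom c) (Bf u))

lemma sat_Af : ∀ (u w : List σ), sat (Af u) w ↔ WS u w := by
  intro u
  induction u with
  | nil => intro w; simpa [Af, sat] using WS.nil w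
  | cons c u ih =>
    intro w
    show (∃ i < w.length, (w.drop i).head? = some c ∧ sat (Af u) (w.drop i)) ↔ _
    rw [ws_cons_iff]
    constructor
    · rintro ⟨i, hi, h1, h2⟩; exact ⟨i, hi, h1, (ih _).1 h2⟩
    · rintro ⟨i, hi, h1, h2⟩; exact ⟨i, hi, h1, (ih _).2 h2⟩

lemma sat_Bf : ∀ (u w : List σ), w ≠ [] → (sat (Bf u) w ↔ WS w u) := by
  intro u
  induction u with
  | nil =>
    intro w hw
    simp only [Bf, sat, false_iff]
    intro h
    exact hw h.nil_right
  | cons c u ih =>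
    intro w hw
    show (∀ i < w.length, (w.drop i).head? = some c ∨ sat (Bf u) (w.drop i)) ↔ _
    rw [ws_into_cons_iff]
    constructor
    · intro h i hi
      rcases h i hi with h1 | h1
      · exact Or.inl h1
      · exact Or.inr ((ih _ (by simp [List.drop_eq_nil_iff]; omega)).1 h1)
    · intro h i hi
      rcases h i hi with h1 | h1
      · exact Or.inl h1
      · exact Or.inr ((ih _ (by simp [List.drop_eq_nil_iff]; omega)).2 h1)

lemma size_Af : ∀ u : List σ, (Af u).size = 3 * u.length + 1 := by
  intro u
  induction u with
  | nil => rfl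
  | cons c u ih => simp [Af, size, ih]; ring

lemma size_Bf : ∀ u : List σ, (Bf u).size = 3 * u.length + 1 := by
  intro u
  induction u with
  | nil => rfl
  | cons c u ih => simp [Bf, size, ih]; ring

lemma uses_Af : ∀ u : List σ, (Af u).usesOnly {Op.F, Op.G, Op.And, Op.Or} := by
  intro u
  induction u with
  | nil => trivial
  | cons c u ih => exact ⟨by simp, by simp, trivial, ih⟩

lemma uses_Bf : ∀ u : List σ, (Bf u).usesOnly {Op.F, Op.G, Op.And, Op.Or} := by
  intro u
  induction u with
  | nil => trivial
  | cons c u ih => exact ⟨by simp, by simp, trivial, ih⟩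

def ConjL : List (LTL σ) → LTL σ
  | [] => .top
  | ψ :: L => .conj ψ (ConjL L)

def DisjL : List (LTL σ) → LTL σ
  | [] => .bot
  | ψ :: L => .disj ψ (DisjL L)

lemma sat_ConjL : ∀ (L : List (LTL σ)) (w : List σ),
    sat (ConjL L) w ↔ ∀ ψ ∈ L, sat ψ w := by
  intro L w
  induction L with
  | nil => simp [ConjL, sat]
  | cons ψ L ih => simp [ConjL, sat, ih]

lemma sat_DisjL : ∀ (L : List (LTL σ)) (w : List σ),
    sat (DisjL L) w ↔ ∃ ψ ∈ L, sat ψ w := by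
  intro L w
  induction L with
  | nil => simp [DisjL, sat]
  | cons ψ L ih => simp [DisjL, sat, ih]

lemma size_ConjL (k : ℕ) : ∀ L : List (LTL σ), (∀ ψ ∈ L, size ψ ≤ k) →
    size (ConjL L) ≤ L.length * (k + 1) + 1 := by
  intro L
  induction L with
  | nil => intro _; simp [ConjL, size]
  | cons ψ L ih =>
    intro h
    have h1 := h ψ (by simp)
    have h2 := ih fun χ hχ => h χ (by simp [hχ])
    simp only [ConjL, size, List.length_cons]
    nlinarith

lemma size_DisjL (k : ℕ) : ∀ L : List (LTL σ), (∀ ψ ∈ L, size ψ ≤ k) →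
    size (DisjL L) ≤ L.length * (k + 1) + 1 := by
  intro L
  induction L with
  | nil => intro _; simp [DisjL, size]
  | cons ψ L ih =>
    intro h
    have h1 := h ψ (by simp)
    have h2 := ih fun χ hχ => h χ (by simp [hχ])
    simp only [DisjL, size, List.length_cons]
    nlinarith

lemma uses_ConjL : ∀ L : List (LTL σ),
    (∀ ψ ∈ L, ψ.usesOnly {Op.F, Op.G, Op.And, Op.Or}) →
    (ConjL L).usesOnly {Op.F, Op.G, Op.And, Op.Or} := by
  intro L
  induction L with
  | nil => intro _; trivial
  | cons ψ L ih =>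
    intro h
    exact ⟨by simp, h ψ (by simp), ih fun χ hχ => h χ (by simp [hχ])⟩

lemma uses_DisjL : ∀ L : List (LTL σ),
    (∀ ψ ∈ L, ψ.usesOnly {Op.F, Op.G, Op.And, Op.Or}) →
    (DisjL L).usesOnly {Op.F, Op.G, Op.And, Op.Or} := by
  intro L
  induction L with
  | nil => intro _; trivial
  | cons ψ L ih =>
    intro h
    exact ⟨by simp, h ψ (by simp), ih fun χ hχ => h χ (by simp [hχ])⟩

noncomputable def neDec : DecidableRel (fun (a b : σ) => a ≠ b) :=
  fun _ _ => Classical.dec _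

attribute [local instance] neDec

/-- Condensation (destuttering) of a word. -/
noncomputable abbrev d (w : List σ) : List σ := w.destutter (· ≠ ·)

lemma d_cons_cons_eq {a b : σ} (t : List σ) (hab : a = b) :
    d (a :: b :: t) = d (a :: t) := by
  simp only [d]
  rw [List.destutter_cons_cons, if_neg (by simp [hab]), ← List.destutter_cons']

lemma d_cons_cons_ne {a b : σ} (t : List σ) (hab : a ≠ b) :
    d (a :: b :: t) = a :: d (b :: t) := by
  simp only [d]
  rw [List.destutter_cons_cons, if_pos hab, ← List.destutter_cons']

lemma d_head : ∀ w : List σ, (d w).head? = w.head? := by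
  intro w
  induction w with
  | nil => rfl
  | cons a t ih =>
    cases t with
    | nil => rfl
    | cons b t' =>
      by_cases hab : a = b
      · subst hab
        rw [d_cons_cons_eq _ rfl]
        rw [ih]
        rfl
      · rw [d_cons_cons_ne _ hab]
        rfl

lemma d_ne_nil {w : List σ} (hw : w ≠ []) : d w ≠ [] := by
  simpa [List.destutter_eq_nil] using hw

lemma d_drop : ∀ (w : List σ) (i : ℕ), i < w.length →
    ∃ j < (d w).length, d (w.drop i) = (d w).drop j := by
  intro w
  induction w with
  | nil => intro i hi; simp at hi
  | cons a t ih =>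
    intro i hi
    match i with
    | 0 =>
      refine ⟨0, ?_, by simp⟩
      have := d_ne_nil (w := a :: t) (by simp)
      exact List.length_pos_iff.2 this
    | i + 1 =>
      have hit : i < t.length := by simpa using hi
      obtain ⟨j, hj, hd⟩ := ih i hit
      match t, hit, hj, hd with
      | b :: t', _, hj, hd =>
        by_cases hab : a = b
        · subst hab
          rw [d_cons_cons_eq _ rfl]
          exact ⟨j, hj, hd⟩
        · rw [d_cons_cons_ne _ hab]
          exact ⟨j + 1, by simpa using hj, hd⟩

lemma d_drop_rev : ∀ (w : List σ) (j : ℕ), j < (d w).length →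
    ∃ i < w.length, (d w).drop j = d (w.drop i) := by
  intro w
  induction w with
  | nil => intro j hj; simp at hj
  | cons a t ih =>
    intro j hj
    cases t with
    | nil =>
      have hj0 : j = 0 := by simpa using hj
      subst hj0
      exact ⟨0, by simp, by simp⟩
    | cons b t' =>
      by_cases hab : a = b
      · subst hab
        rw [d_cons_cons_eq _ rfl] at hj ⊢
        obtain ⟨i, hi, hd⟩ := ih j hj
        exact ⟨i + 1, by simpa using hi, hd⟩
      · rw [d_cons_cons_ne _ hab] at hj ⊢
        match j with
        | 0 => exact ⟨0, by simp, by simp [d_cons_cons_ne _ hab]⟩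
        | j + 1 =>
          obtain ⟨i, hi, hd⟩ := ih j (by simpa using hj)
          exact ⟨i + 1, by simpa using hi, by simpa using hd⟩

lemma notin_frag_X : Op.X ∉ ({Op.F, Op.G, Op.And, Op.Or} : Set Op) := by simp
lemma notin_frag_U : Op.U ∉ ({Op.F, Op.G, Op.And, Op.Or} : Set Op) := by simp
lemma notin_frag_Not : Op.Not ∉ ({Op.F, Op.G, Op.And, Op.Or} : Set Op) := by simp

/-- Fragment formulas are invariant under destuttering. -/
lemma sat_d {φ : LTL σ} (h : φ.usesOnly {Op.F, Op.G, Op.And, Op.Or}) :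
    ∀ w : List σ, sat φ w ↔ sat φ (d w) := by
  induction φ with
  | top => intro w; simp [sat]
  | bot => intro w; simp [sat]
  | atom c => intro w; show w.head? = _ ↔ (d w).head? = _; rw [d_head]
  | natom c => exact absurd h notin_frag_Not
  | conj φ ψ ihφ ihψ =>
    obtain ⟨-, h1, h2⟩ := h
    intro w
    exact and_congr (ihφ h1 w) (ihψ h2 w)
  | disj φ ψ ihφ ihψ =>
    obtain ⟨-, h1, h2⟩ := h
    intro w
    exact or_congr (ihφ h1 w) (ihψ h2 w)
  | next φ ih => exact absurd h.1 notin_frag_X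
  | untl φ ψ ihφ ihψ => exact absurd h.1 notin_frag_U
  | ev φ ih =>
    obtain ⟨-, h1⟩ := h
    intro w
    constructor
    · rintro ⟨i, hi, hs⟩
      obtain ⟨j, hj, hd⟩ := d_drop w i hi
      exact ⟨j, hj, by rw [← hd]; exact (ih h1 _).1 hs⟩
    · rintro ⟨j, hj, hs⟩
      obtain ⟨i, hi, hd⟩ := d_drop_rev w j hj
      exact ⟨i, hi, (ih h1 _).2 (by rw [← hd]; exact hs)⟩
  | glob φ ih =>
    obtain ⟨-, h1⟩ := h
    intro w
    constructor
    · intro hs j hj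
      obtain ⟨i, hi, hd⟩ := d_drop_rev w j hj
      rw [hd]
      exact (ih h1 _).1 (hs i hi)
    · intro hs i hi
      obtain ⟨j, hj, hd⟩ := d_drop w i hi
      exact (ih h1 _).2 (by rw [hd]; exact hs j hj)

lemma sublist_of_cons_ne {l v : List σ} {a : σ} (h : List.Sublist l (a :: v))
    (hh : l.head? ≠ some a) : List.Sublist l v := by
  cases h with
  | cons _ h => exact h
  | cons_cons _ h => exact absurd rfl hh

lemma ws_d_sublist {u v : List σ} (h : WS u v) : List.Sublist (d u) v := by
  induction h with
  | nil => simp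
  | skip a _ ih => exact ih.cons a
  | @take u' v' a h ih =>
    cases u' with
    | nil => simpa using List.cons_sublist_cons.2 (List.nil_sublist v')
    | cons b u'' =>
      by_cases hab : a = b
      · rw [d_cons_cons_eq _ hab]
        subst hab
        
        exact ih
      · rw [d_cons_cons_ne _ hab]
        refine List.cons_sublist_cons.2 (sublist_of_cons_ne ih ?_)
        rw [d_head]
        simp only [List.head?_cons, ne_eq, Option.some.injEq]
        exact fun hba => hab hba.symm

lemma chain'_ne_head {x' : List σ} {a : σ} (h : List.Chain' (· ≠ ·) (a :: x')) :
    x'.head? ≠ some a := by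
  cases x' with
  | nil => simp
  | cons c x'' =>
    simp only [List.head?_cons, ne_eq, Option.some.injEq]
    intro hca
    exact (List.isChain_cons_cons.1 h).1 hca.symm

lemma sublist_d_of_chain : ∀ (l x : List σ), List.Sublist x l → x.Chain' (· ≠ ·) → List.Sublist x (d l) := by
  intro l
  induction l with
  | nil => intro x hx _; simpa using hx
  | cons a t iht =>
    intro x hx hc
    cases t with
    | nil =>
      simpa using hx
    | cons b t' =>
      by_cases hab : a = b
      · subst hab
        rw [d_cons_cons_eq _ rfl]
        
        -- d (a :: a :: t') = d (a :: t') = d t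
        cases hx with
        | cons _ h => exact iht x h hc
        | cons_cons _ h =>
          
          rename_i x'
          have hx' : List.Sublist x' t' := sublist_of_cons_ne h (chain'_ne_head hc)
          exact iht _ (List.cons_sublist_cons.2 hx') hc
      · rw [d_cons_cons_ne _ hab]
        cases hx with
        | cons _ h => exact (iht x h hc).cons a
        | cons_cons _ h =>
          rename_i x'
          exact List.cons_sublist_cons.2 (iht x' h hc.tail)

lemma d_eq_of_mutual {u v : List σ} (h1 : WS u v) (h2 : WS v u) : d u = d v :=
  (sublist_d_of_chain v (d u) (ws_d_sublist h1) (List.isChain_destutter _ _)).antisymm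
    (sublist_d_of_chain u (d v) (ws_d_sublist h2) (List.isChain_destutter _ _))

lemma sat_iff_of_mutual {φ : LTL σ} (hφ : φ.usesOnly {Op.F, Op.G, Op.And, Op.Or})
    {u v : List σ} (h1 : WS u v) (h2 : WS v u) : sat φ u ↔ sat φ v := by
  rw [sat_d hφ u, sat_d hφ v, d_eq_of_mutual h1 h2]

end LTLSep
section Main
open LTL LTLSep

/-- Construction of a small separating formula, assuming no mutual weak-subword pair. -/
lemma construct_sep {σ : Type} (P N : Finset (List σ))
    (hP : ∀ w ∈ P, w ≠ []) (hN : ∀ w ∈ N, w ≠ [])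
    (H : ∀ u ∈ P, ∀ v ∈ N, ¬ (WeakSubword u v ∧ WeakSubword v u)) :
    ∃ φ : LTL σ,
      φ.usesOnly {LTL.Op.F, LTL.Op.G, LTL.Op.And, LTL.Op.Or} ∧
      φ.size ≤ 3 * ((∑ w ∈ P, w.length) + (∑ w ∈ N, w.length) + 1) ^ 3 ∧
      φ.Separates P N := by
  classical
  have Hws : ∀ u ∈ P, ∀ v ∈ N, ¬ (WS u v ∧ WS v u) := by
    rintro u hu v hv ⟨h1, h2⟩
    exact H u hu v hv ⟨ws_to_weak h1, ws_to_weak h2⟩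
  set pair : List σ → List σ → LTL σ :=
    fun u v => if WS u v then Bf u else Af u with hpair
  set φ : LTL σ :=
    DisjL (P.toList.map fun u => ConjL (N.toList.map fun v => pair u v)) with hφ
  have pair_uses : ∀ u v, (pair u v).usesOnly {Op.F, Op.G, Op.And, Op.Or} := by
    intro u v
    rw [hpair]
    by_cases h : WS u v
    · simp only [if_pos h]; exact uses_Bf u
    · simp only [if_neg h]; exact uses_Af u
  have pair_size : ∀ u v, (pair u v).size = 3 * u.length + 1 := by
    intro u v
    rw [hpair]
    by_cases h : WS u v
    · simp only [if_pos h]; exact size_Bf u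
    · simp only [if_neg h]; exact size_Af u
  have pair_pos : ∀ u ∈ P, ∀ v ∈ N, sat (pair u v) u := by
    intro u hu v hv
    rw [hpair]
    by_cases h : WS u v
    · simp only [if_pos h]
      exact (sat_Bf u u (hP u hu)).2 (ws_refl u)
    · simp only [if_neg h]
      exact (sat_Af u u).2 (ws_refl u)
  have pair_neg : ∀ u ∈ P, ∀ v ∈ N, ¬ sat (pair u v) v := by
    intro u hu v hv
    rw [hpair]
    by_cases h : WS u v
    · simp only [if_pos h]
      intro hs
      exact Hws u hu v hv ⟨h, (sat_Bf u v (hN v hv)).1 hs⟩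
    · simp only [if_neg h]
      intro hs
      exact h ((sat_Af u v).1 hs)
  refine ⟨φ, ?_, ?_, ?_, ?_⟩
  · rw [hφ]
    refine uses_DisjL _ fun ψ hψ => ?_
    obtain ⟨u, -, rfl⟩ := List.mem_map.1 hψ
    refine uses_ConjL _ fun χ hχ => ?_
    obtain ⟨v, -, rfl⟩ := List.mem_map.1 hχ
    exact pair_uses u v
  · -- size bound
    set n := (∑ w ∈ P, w.length) + (∑ w ∈ N, w.length) with hn
    have hPcard : P.card ≤ n := by
      calc P.card = ∑ _w ∈ P, 1 := by simp
        _ ≤ ∑ w ∈ P, w.length :=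
            Finset.sum_le_sum fun w hw => List.length_pos_iff.2 (hP w hw)
        _ ≤ n := by omega
    have hNcard : N.card ≤ n := by
      calc N.card = ∑ _w ∈ N, 1 := by simp
        _ ≤ ∑ w ∈ N, w.length :=
            Finset.sum_le_sum fun w hw => List.length_pos_iff.2 (hN w hw)
        _ ≤ n := by omega
    have hulen : ∀ u ∈ P, u.length ≤ n := by
      intro u hu
      have : u.length ≤ ∑ w ∈ P, w.length := Finset.single_le_sum
        (f := fun w : List σ => w.length) (fun _ _ => Nat.zero_le _) hu
      omega
    have hconj : ∀ u ∈ P.toList,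
        size (ConjL (N.toList.map fun v => pair u v)) ≤ N.card * (3 * n + 2) + 1 := by
      intro u hu
      have hu' : u ∈ P := Finset.mem_toList.1 hu
      have := size_ConjL (3 * n + 1) (N.toList.map fun v => pair u v) ?_
      · simpa [Finset.length_toList] using this
      · intro ψ hψ
        obtain ⟨v, -, rfl⟩ := List.mem_map.1 hψ
        rw [pair_size]
        have := hulen u hu'
        omega
    have hbig := size_DisjL (N.card * (3 * n + 2) + 1)
      (P.toList.map fun u => ConjL (N.toList.map fun v => pair u v)) ?_
    · rw [hφ]
      have hlen : (P.toList.map fun u =>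
          ConjL (N.toList.map fun v => pair u v)).length = P.card := by
        simp [Finset.length_toList]
      rw [hlen] at hbig
      have h1 : N.card * (3 * n + 2) + 1 + 1 ≤ n * (3 * n + 2) + 2 := by
        have : N.card * (3 * n + 2) ≤ n * (3 * n + 2) := Nat.mul_le_mul_right _ hNcard
        omega
      calc size (DisjL (P.toList.map fun u => ConjL (N.toList.map fun v => pair u v)))
          ≤ P.card * (N.card * (3 * n + 2) + 1 + 1) + 1 := hbig
        _ ≤ n * (n * (3 * n + 2) + 2) + 1 :=
            Nat.add_le_add_right (Nat.mul_le_mul hPcard h1) 1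
        _ ≤ 3 * (n + 1) ^ 3 := by nlinarith [sq_nonneg n]
    · intro ψ hψ
      obtain ⟨u, hu, rfl⟩ := List.mem_map.1 hψ
      exact hconj u hu
  · -- positive words satisfy φ
    intro u hu
    rw [hφ, sat_DisjL]
    refine ⟨ConjL (N.toList.map fun v => pair u v), List.mem_map.2 ⟨u, Finset.mem_toList.2 hu, rfl⟩, ?_⟩
    rw [sat_ConjL]
    intro χ hχ
    obtain ⟨v, hv, rfl⟩ := List.mem_map.1 hχ
    exact pair_pos u hu v (Finset.mem_toList.1 hv)
  · -- negative words do not satisfy φ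
    intro v hv hs
    rw [hφ, sat_DisjL] at hs
    obtain ⟨ψ, hψ, hsψ⟩ := hs
    obtain ⟨u, hu, rfl⟩ := List.mem_map.1 hψ
    rw [sat_ConjL] at hsψ
    exact pair_neg u (Finset.mem_toList.1 hu) v hv
      (hsψ _ (List.mem_map.2 ⟨v, Finset.mem_toList.2 hv, rfl⟩))

/-- the operator set `{F, G, ∧, ∨}` has the short formula property; moreover
a separating formula exists iff no positive word and negative word are weak subwords of
each other. -/
theorem short_formula_property_F_G_and_or :
    ∃ p : Polynomial ℕ, ∀ (σ : Type) [Fintype σ] (P N : Finset (List σ)),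
      (∀ w ∈ P, w ≠ []) → (∀ w ∈ N, w ≠ []) →
      (((∃ φ : LTL σ,
          φ.usesOnly {LTL.Op.F, LTL.Op.G, LTL.Op.And, LTL.Op.Or} ∧ φ.Separates P N) →
        ∃ φ : LTL σ,
          φ.usesOnly {LTL.Op.F, LTL.Op.G, LTL.Op.And, LTL.Op.Or} ∧
          φ.size ≤ p.eval ((∑ w ∈ P, w.length) + (∑ w ∈ N, w.length)) ∧
          φ.Separates P N) ∧
       ((∃ φ : LTL σ,
          φ.usesOnly {LTL.Op.F, LTL.Op.G, LTL.Op.And, LTL.Op.Or} ∧ φ.Separates P N) ↔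
        (∀ u ∈ P, ∀ v ∈ N, ¬ (WeakSubword u v ∧ WeakSubword v u)))) := by
  refine ⟨3 * (Polynomial.X + 1) ^ 3, ?_⟩
  intro σ _ P N hP hN
  have heval : ∀ n : ℕ, (3 * (Polynomial.X + 1) ^ 3 : Polynomial ℕ).eval n
      = 3 * (n + 1) ^ 3 := by
    intro n
    simp [Polynomial.eval_mul, Polynomial.eval_pow]
  have inv : (∃ φ : LTL σ,
      φ.usesOnly {LTL.Op.F, LTL.Op.G, LTL.Op.And, LTL.Op.Or} ∧ φ.Separates P N) →
      ∀ u ∈ P, ∀ v ∈ N, ¬ (WeakSubword u v ∧ WeakSubword v u) := by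
    rintro ⟨φ, hφ, hsep⟩ u hu v hv ⟨h1, h2⟩
    exact hsep.2 v hv
      ((sat_iff_of_mutual hφ (weak_to_ws _ _ h1) (weak_to_ws _ _ h2)).1 (hsep.1 u hu))
  constructor
  · intro h
    obtain ⟨φ, h1, h2, h3⟩ := construct_sep P N hP hN (inv h)
    exact ⟨φ, h1, by rw [heval]; exact h2, h3⟩
  · constructor
    · exact inv
    · intro h
      obtain ⟨φ, h1, -, h3⟩ := construct_sep P N hP hN h
      exact ⟨φ, h1, h3⟩

end Main
end

section
/- Every LTL(G,∧) formula is equivalent over nonempty finite words to a formula of size at most 2, namely to one of ⊤, ⊥, a, or G a for some letter a ∈ Σ. -/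
namespace LTL

variable {σ : Type}

def NF (ψ : LTL σ) : Prop :=
  ψ = top ∨ ψ = bot ∨ (∃ a : σ, ψ = atom a) ∨ (∃ a : σ, ψ = glob (atom a))

lemma nf_size {ψ : LTL σ} (h : NF ψ) : ψ.size ≤ 2 := by
  rcases h with h | h | ⟨a, h⟩ | ⟨a, h⟩ <;> subst h <;> simp [size]

lemma sat_glob_atom_iff {a : σ} {w : List σ} :
    sat (glob (atom a)) w ↔ ∀ i < w.length, (w.drop i).head? = some a := Iff.rfl

lemma glob_atom_head {a : σ} {w : List σ} (hw : w ≠ [])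
    (h : sat (glob (atom a)) w) : w.head? = some a := by
  have := h 0 (by simpa [List.length_pos_iff] using hw)
  simpa [sat] using this

lemma head_eq {a b : σ} {w : List σ} (ha : w.head? = some a) (hb : w.head? = some b) :
    a = b := by rw [ha] at hb; exact (Option.some_inj.mp hb)

/-- Combine two normal forms under conjunction. -/
lemma conj_nf {ψ₁ ψ₂ : LTL σ} (h₁ : NF ψ₁) (h₂ : NF ψ₂) :
    ∃ χ : LTL σ, NF χ ∧ ∀ w : List σ, w ≠ [] → ((sat ψ₁ w ∧ sat ψ₂ w) ↔ sat χ w) := by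
  rcases h₁ with rfl | rfl | ⟨a, rfl⟩ | ⟨a, rfl⟩
  · exact ⟨ψ₂, h₂, fun w _ => by simp [sat]⟩
  · exact ⟨bot, Or.inr (Or.inl rfl), fun w _ => by simp [sat]⟩
  · rcases h₂ with rfl | rfl | ⟨b, rfl⟩ | ⟨b, rfl⟩
    · exact ⟨atom a, Or.inr (Or.inr (Or.inl ⟨a, rfl⟩)), fun w _ => by simp [sat]⟩
    · exact ⟨bot, Or.inr (Or.inl rfl), fun w _ => by simp [sat]⟩
    · by_cases hab : a = b
      · subst hab
        exact ⟨atom a, Or.inr (Or.inr (Or.inl ⟨a, rfl⟩)), fun w _ => by simp [sat]⟩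
      · refine ⟨bot, Or.inr (Or.inl rfl), fun w hw => ?_⟩
        simp only [sat, iff_false]
        rintro ⟨ha, hb⟩
        exact hab (head_eq ha hb)
    · by_cases hab : a = b
      · subst hab
        refine ⟨glob (atom a), Or.inr (Or.inr (Or.inr ⟨a, rfl⟩)), fun w hw => ?_⟩
        exact ⟨fun ⟨_, hg⟩ => hg, fun hg => ⟨glob_atom_head hw hg, hg⟩⟩
      · refine ⟨bot, Or.inr (Or.inl rfl), fun w hw => ?_⟩
        simp only [sat, iff_false]
        rintro ⟨ha, hg⟩
        exact hab (head_eq ha (glob_atom_head hw hg))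
  · rcases h₂ with rfl | rfl | ⟨b, rfl⟩ | ⟨b, rfl⟩
    · exact ⟨glob (atom a), Or.inr (Or.inr (Or.inr ⟨a, rfl⟩)), fun w _ => by simp [sat]⟩
    · exact ⟨bot, Or.inr (Or.inl rfl), fun w _ => by simp [sat]⟩
    · by_cases hab : a = b
      · subst hab
        refine ⟨glob (atom a), Or.inr (Or.inr (Or.inr ⟨a, rfl⟩)), fun w hw => ?_⟩
        exact ⟨fun ⟨hg, _⟩ => hg, fun hg => ⟨hg, glob_atom_head hw hg⟩⟩
      · refine ⟨bot, Or.inr (Or.inl rfl), fun w hw => ?_⟩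
        simp only [sat, iff_false]
        rintro ⟨hg, hb⟩
        exact hab (head_eq (glob_atom_head hw hg) hb)
    · by_cases hab : a = b
      · subst hab
        exact ⟨glob (atom a), Or.inr (Or.inr (Or.inr ⟨a, rfl⟩)), fun w _ => by simp [sat]⟩
      · refine ⟨bot, Or.inr (Or.inl rfl), fun w hw => ?_⟩
        simp only [sat, iff_false]
        rintro ⟨hga, hgb⟩
        exact hab (head_eq (glob_atom_head hw hga) (glob_atom_head hw hgb))

lemma glob_nf {ψ : LTL σ} (h : NF ψ) :
    ∃ χ : LTL σ, NF χ ∧ ∀ w : List σ, w ≠ [] → (sat (glob ψ) w ↔ sat χ w) := by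
  rcases h with rfl | rfl | ⟨a, rfl⟩ | ⟨a, rfl⟩
  · exact ⟨top, Or.inl rfl, fun w _ => by simp [sat]⟩
  · refine ⟨bot, Or.inr (Or.inl rfl), fun w hw => ?_⟩
    simp only [sat, iff_false, not_forall]
    exact ⟨0, by simpa [List.length_pos_iff] using hw, fun h => h⟩
  · exact ⟨glob (atom a), Or.inr (Or.inr (Or.inr ⟨a, rfl⟩)), fun w _ => Iff.rfl⟩
  · refine ⟨glob (atom a), Or.inr (Or.inr (Or.inr ⟨a, rfl⟩)), fun w hw => ?_⟩
    constructor
    · intro hg i hi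
      have := hg i hi 0 (by
        simpa [List.length_pos_iff, List.drop_eq_nil_iff] using Nat.not_le.mpr hi)
      simpa using this
    · intro hg i hi j hj
      rw [List.drop_drop]
      have : j + i < w.length := by
        have := (List.length_drop (i := i) (l := w)) ▸ hj
        omega
      rw [Nat.add_comm]; simpa [sat] using hg (j + i) this

end LTL


/-- every `LTL(G,∧)` formula is equivalent over nonempty finite words
to one of `⊤`, `⊥`, `a`, `G a`, i.e. to a formula of size at most 2. -/
theorem glob_and_fragment_equiv_small {σ : Type} (φ : LTL σ)
    (h : φ.usesOnly {LTL.Op.G, LTL.Op.And}) :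
    ∃ ψ : LTL σ, ψ.size ≤ 2 ∧
      (ψ = LTL.top ∨ ψ = LTL.bot ∨ (∃ a : σ, ψ = LTL.atom a) ∨
        (∃ a : σ, ψ = LTL.glob (LTL.atom a))) ∧
      LTL.Equiv φ ψ := by
  induction φ with
  | top => exact ⟨LTL.top, by simp [LTL.size], Or.inl rfl, fun w _ => Iff.rfl⟩
  | bot => exact ⟨LTL.bot, by simp [LTL.size], Or.inr (Or.inl rfl), fun w _ => Iff.rfl⟩
  | atom a =>
      exact ⟨LTL.atom a, by simp [LTL.size], Or.inr (Or.inr (Or.inl ⟨a, rfl⟩)),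
        fun w _ => Iff.rfl⟩
  | natom a => simp [LTL.usesOnly] at h
  | conj φ ψ ih₁ ih₂ =>
      obtain ⟨hA, h1, h2⟩ := h
      obtain ⟨ψ₁, _, n₁, e₁⟩ := ih₁ h1
      obtain ⟨ψ₂, _, n₂, e₂⟩ := ih₂ h2
      obtain ⟨χ, nχ, hχ⟩ := LTL.conj_nf n₁ n₂
      exact ⟨χ, LTL.nf_size nχ, nχ, fun w hw =>
        ((and_congr (e₁ w hw) (e₂ w hw)).trans (hχ w hw))⟩
  | disj φ ψ _ _ => simp [LTL.usesOnly] at h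
  | next φ _ => simp [LTL.usesOnly] at h
  | ev φ _ => simp [LTL.usesOnly] at h
  | glob φ ih =>
      obtain ⟨hG, h1⟩ := h
      obtain ⟨ψ₁, _, n₁, e₁⟩ := ih h1
      obtain ⟨χ, nχ, hχ⟩ := LTL.glob_nf n₁
      refine ⟨χ, LTL.nf_size nχ, nχ, fun w hw => ?_⟩
      rw [← hχ w hw]
      show (∀ i < w.length, LTL.sat φ (w.drop i)) ↔ _
      refine forall_congr' fun i => forall_congr' fun hi => ?_
      exact e₁ (w.drop i) (by simp [List.drop_eq_nil_iff]; omega)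
  | untl φ ψ _ _ => simp [LTL.usesOnly] at h
end

section
/- For every formula φ of LTL(X,∧) there exists a pattern equivalent to φ (over nonempty finite words) whose size is smaller than or equal to the size of φ. -/
/-- Patterns: `LTL(X,∧)` formulas of the form `X^{j₁}(c₁ ∧ X^{j₂}(⋯ ∧ X^{j_p} c_p)⋯)`. -/
inductive IsPattern {σ : Type} : LTL σ → Prop
  | atom (c : σ) : IsPattern (LTL.atom c)
  | next {φ : LTL σ} : IsPattern φ → IsPattern (LTL.next φ)
  | cons (c : σ) {φ : LTL σ} : IsPattern φ → IsPattern (LTL.conj (LTL.atom c) φ)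


namespace PNF
open LTL

variable {σ : Type}

/-- Word satisfies a list of positional constraints. -/
def wSat (L : List (ℕ × σ)) (w : List σ) : Prop := ∀ p ∈ L, w[p.1]? = some p.2

lemma wSat_cons {p : ℕ × σ} {L : List (ℕ × σ)} {w : List σ} :
    wSat (p :: L) w ↔ w[p.1]? = some p.2 ∧ wSat L w := by
  simp [wSat]

lemma claimA (φ : LTL σ) (h1 : φ.usesOnly {LTL.Op.X, LTL.Op.And}) (h2 : φ.constFree) :
    ∃ (L : List (ℕ × σ)) (M : ℕ), L ≠ [] ∧ (∀ p ∈ L, p.1 ≤ M) ∧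
      2 * L.length - 1 + M ≤ φ.size ∧ ∀ w, LTL.sat φ w ↔ wSat L w := by
  induction φ with
  | top => exact absurd h2 (by simp [LTL.constFree])
  | bot => exact absurd h2 (by simp [LTL.constFree])
  | natom c => simp [LTL.usesOnly] at h1
  | disj φ ψ ihφ ihψ => simp [LTL.usesOnly] at h1
  | ev φ ih => simp [LTL.usesOnly] at h1
  | glob φ ih => simp [LTL.usesOnly] at h1
  | untl φ ψ ihφ ihψ => simp [LTL.usesOnly] at h1
  | atom c =>
      refine ⟨[(0, c)], 0, by simp, by simp, by simp [LTL.size], fun w => ?_⟩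
      simp [LTL.sat, wSat, List.head?_eq_getElem?]
  | next φ ih =>
      obtain ⟨L, M, hne, hM, hsz, hequiv⟩ := ih h1.2 h2
      refine ⟨L.map (fun p => (p.1 + 1, p.2)), M + 1, by simpa using hne, ?_, ?_, fun w => ?_⟩
      · simp only [List.mem_map]
        rintro p ⟨q, hq, rfl⟩
        simpa using Nat.add_le_add_right (hM q hq) 1
      · simp only [List.length_map, LTL.size]
        omega
      · obtain ⟨p₀, hp₀⟩ := List.exists_mem_of_ne_nil L hne
        have key : ∀ p : ℕ × σ, w.tail[p.1]? = w[p.1 + 1]? := by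
          intro p; simp [List.getElem?_tail]
        constructor
        · rintro ⟨hlen, hsat⟩
          rw [hequiv] at hsat
          simp only [wSat, List.mem_map]
          rintro p ⟨q, hq, rfl⟩
          rw [← key]; exact hsat q hq
        · intro h
          simp only [wSat, List.mem_map] at h
          have hsat : wSat L w.tail := by
            intro q hq
            rw [key]; exact h _ ⟨q, hq, rfl⟩
          have h0 := h _ ⟨p₀, hp₀, rfl⟩
          have hlt : p₀.1 + 1 < w.length := by
            rw [List.getElem?_eq_some_iff] at h0; exact h0.1
          exact ⟨by omega, (hequiv w.tail).2 hsat⟩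
  | conj φ ψ ihφ ihψ =>
      obtain ⟨L₁, M₁, hne₁, hM₁, hsz₁, heq₁⟩ := ihφ h1.2.1 h2.1
      obtain ⟨L₂, M₂, hne₂, hM₂, hsz₂, heq₂⟩ := ihψ h1.2.2 h2.2
      refine ⟨L₁ ++ L₂, max M₁ M₂, by simp [hne₁], ?_, ?_, fun w => ?_⟩
      · intro p hp
        rcases List.mem_append.1 hp with h | h
        · exact le_max_of_le_left (hM₁ p h)
        · exact le_max_of_le_right (hM₂ p h)
      · have l₁ : 1 ≤ L₁.length := List.length_pos_iff.2 hne₁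
        have l₂ : 1 ≤ L₂.length := List.length_pos_iff.2 hne₂
        simp only [List.length_append, LTL.size]
        have : max M₁ M₂ ≤ M₁ + M₂ := by omega
        omega
      · show LTL.sat φ w ∧ LTL.sat ψ w ↔ _
        rw [heq₁, heq₂]
        simp [wSat, or_imp, forall_and]

/-- Build a pattern from a nonempty list of (gap, letter) pairs. -/
def build : List (ℕ × σ) → LTL σ
  | [] => LTL.bot
  | [(j, c)] => LTL.next^[j] (LTL.atom c)
  | (j, c) :: q :: r => LTL.next^[j] (LTL.conj (LTL.atom c) (build (q :: r)))

lemma isPattern_nextPow {ψ : LTL σ} (h : IsPattern ψ) (n : ℕ) :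
    IsPattern (LTL.next^[n] ψ) := by
  induction n with
  | zero => simpa using h
  | succ n ih => rw [Function.iterate_succ_apply']; exact IsPattern.next ih

lemma isPattern_build : ∀ g : List (ℕ × σ), g ≠ [] → IsPattern (build g)
  | [], h => absurd rfl h
  | [(j, c)], _ => isPattern_nextPow (IsPattern.atom c) j
  | (j, c) :: q :: r, _ =>
      isPattern_nextPow (IsPattern.cons c (isPattern_build (q :: r) (by simp))) j

lemma size_nextPow (n : ℕ) (ψ : LTL σ) : (LTL.next^[n] ψ).size = n + ψ.size := by
  induction n with
  | zero => simp
  | succ n ih => rw [Function.iterate_succ_apply']; simp only [LTL.size, ih]; omega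

lemma size_build : ∀ g : List (ℕ × σ), g ≠ [] →
    (build g).size = (g.map Prod.fst).sum + 2 * g.length - 1
  | [], h => absurd rfl h
  | [(j, c)], _ => by simp [build, size_nextPow, LTL.size]
  | (j, c) :: q :: r, _ => by
      have ih := size_build (q :: r) (by simp)
      have hlen : 1 ≤ (q :: r).length := by simp
      simp only [build, size_nextPow, LTL.size, ih, List.map_cons, List.sum_cons,
        List.length_cons]
      omega

lemma sat_nextPow (n : ℕ) (ψ : LTL σ) (hψ : ∀ v, LTL.sat ψ v → v ≠ []) :
    ∀ w, LTL.sat (LTL.next^[n] ψ) w ↔ n < w.length ∧ LTL.sat ψ (w.drop n) := by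
  induction n with
  | zero =>
      intro w
      simp only [Function.iterate_zero_apply, List.drop_zero]
      constructor
      · intro h
        exact ⟨List.length_pos_iff.2 (hψ w h), h⟩
      · exact fun h => h.2
  | succ n ih =>
      intro w
      rw [Function.iterate_succ_apply']
      rcases w with _ | ⟨a, w⟩
      · constructor
        · rintro ⟨h, -⟩; simp at h
        · rintro ⟨h, -⟩; simp at h
      · show 2 ≤ (a :: w).length ∧ LTL.sat (LTL.next^[n] ψ) (a :: w).tail ↔ _
        simp only [List.tail_cons, List.length_cons, List.drop_succ_cons]
        rw [ih w]
        constructor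
        · rintro ⟨-, h2, h3⟩; exact ⟨by omega, h3⟩
        · rintro ⟨h1, h2⟩; exact ⟨by omega, by omega, h2⟩

/-- Convert gap list to absolute positions, starting from base b. -/
def toabs : ℕ → List (ℕ × σ) → List (ℕ × σ)
  | _, [] => []
  | b, (j, c) :: r => (b + j, c) :: toabs (b + j) r

lemma toabs_shift : ∀ (l : List (ℕ × σ)) (a b : ℕ),
    toabs (a + b) l = (toabs b l).map (fun p => (a + p.1, p.2))
  | [], _, _ => rfl
  | (j, c) :: r, a, b => by
      simp only [toabs, List.map_cons]
      rw [Nat.add_assoc, toabs_shift r a (b + j)]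

lemma wSat_toabs_drop (l : List (ℕ × σ)) (j : ℕ) (w : List σ) :
    wSat (toabs j l) w ↔ wSat (toabs 0 l) (w.drop j) := by
  have h : toabs j l = (toabs 0 l).map (fun p => (j + p.1, p.2)) := by
    simpa using toabs_shift l j 0
  rw [h]
  simp only [wSat, List.mem_map, List.getElem?_drop]
  constructor
  · intro h p hp; exact h _ ⟨p, hp, rfl⟩
  · rintro h p ⟨q, hq, rfl⟩; exact h q hq

lemma head?_drop_eq (w : List σ) (j : ℕ) : (w.drop j).head? = w[j]? := by
  rw [List.head?_eq_getElem?, List.getElem?_drop, Nat.add_zero]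

lemma sat_build : ∀ g : List (ℕ × σ), g ≠ [] →
    ∀ w, LTL.sat (build g) w ↔ wSat (toabs 0 g) w
  | [], h => absurd rfl h
  | [(j, c)], _ => by
      intro w
      rw [build, sat_nextPow j (LTL.atom c)
        (by intro v hv; cases v with | nil => simp [LTL.sat] at hv | cons a t => simp)]
      show _ ↔ wSat ((0 + j, c) :: toabs (0 + j) []) w
      simp only [toabs, Nat.zero_add, wSat_cons]
      have hh := head?_drop_eq w j
      constructor
      · rintro ⟨hlt, hc⟩
        rw [LTL.sat, hh] at hc
        exact ⟨hc, by intro p hp; simp [toabs] at hp⟩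
      · rintro ⟨hc, -⟩
        have hlt : j < w.length := (List.getElem?_eq_some_iff.1 hc).1
        exact ⟨hlt, by rw [LTL.sat, hh]; exact hc⟩
  | (j, c) :: q :: r, _ => by
      intro w
      have ih := sat_build (q :: r) (by simp)
      rw [build, sat_nextPow j _
        (by intro v hv; cases v with
              | nil => exact absurd hv.1 (by simp [LTL.sat])
              | cons a t => simp)]
      show _ ↔ wSat ((0 + j, c) :: toabs (0 + j) (q :: r)) w
      simp only [Nat.zero_add, wSat_cons]
      rw [wSat_toabs_drop]
      have hh := head?_drop_eq w j
      constructor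
      · rintro ⟨hlt, hc, hrest⟩
        rw [LTL.sat, hh] at hc
        exact ⟨hc, (ih _).1 hrest⟩
      · rintro ⟨hc, hrest⟩
        have hlt : j < w.length := (List.getElem?_eq_some_iff.1 hc).1
        exact ⟨hlt, by rw [LTL.sat, hh]; exact hc, (ih _).2 hrest⟩

/-- Convert a sorted absolute list to a gap list. -/
def fromAbs : ℕ → List (ℕ × σ) → List (ℕ × σ)
  | _, [] => []
  | b, (i, c) :: r => (i - b, c) :: fromAbs i r

lemma length_fromAbs : ∀ (S : List (ℕ × σ)) (b : ℕ), (fromAbs b S).length = S.length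
  | [], _ => rfl
  | (i, c) :: r, b => by simp [fromAbs, length_fromAbs r i]

lemma toabs_fromAbs : ∀ (S : List (ℕ × σ)) (b : ℕ),
    S.Pairwise (fun p q => p.1 ≤ q.1) → (∀ p ∈ S, b ≤ p.1) →
    toabs b (fromAbs b S) = S
  | [], _, _, _ => rfl
  | (i, c) :: r, b, hpw, hb => by
      have hbi : b ≤ i := hb (i, c) List.mem_cons_self
      have hbij : b + (i - b) = i := by omega
      simp only [fromAbs, toabs, hbij]
      rw [toabs_fromAbs r i (List.pairwise_cons.1 hpw).2
        (fun p hp => (List.pairwise_cons.1 hpw).1 p hp)]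

lemma sum_fromAbs : ∀ (S : List (ℕ × σ)) (b M : ℕ),
    S.Pairwise (fun p q => p.1 ≤ q.1) → (∀ p ∈ S, b ≤ p.1 ∧ p.1 ≤ M) → b ≤ M →
    ((fromAbs b S).map Prod.fst).sum ≤ M - b
  | [], _, _, _, _, _ => by simp [fromAbs]
  | (i, c) :: r, b, M, hpw, hbM, hb => by
      have h1 := hbM (i, c) List.mem_cons_self
      have ih := sum_fromAbs r i M (List.pairwise_cons.1 hpw).2
        (fun p hp => ⟨(List.pairwise_cons.1 hpw).1 p hp, (hbM p (List.mem_cons_of_mem _ hp)).2⟩) h1.2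
      simp only [fromAbs, List.map_cons, List.sum_cons]
      omega

end PNF

/-- every `LTL(X,∧)` formula is equivalent (over nonempty finite words)
to a pattern of smaller or equal size. -/
theorem pattern_normal_form {σ : Type} (φ : LTL σ)
    (h1 : φ.usesOnly {LTL.Op.X, LTL.Op.And}) (h2 : φ.constFree) :
    ∃ ψ : LTL σ, IsPattern ψ ∧ ψ.size ≤ φ.size ∧ LTL.Equiv φ ψ := by
  classical
  obtain ⟨L, M, hne, hM, hsz, hequiv⟩ := PNF.claimA φ h1 h2
  set rel : ℕ × σ → ℕ × σ → Prop := fun p q => p.1 ≤ q.1 with hrel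
  haveI : DecidableRel rel := fun p q => inferInstanceAs (Decidable (p.1 ≤ q.1))
  haveI : IsTotal (ℕ × σ) rel := ⟨fun p q => Nat.le_total p.1 q.1⟩
  haveI : IsTrans (ℕ × σ) rel := ⟨fun _ _ _ h h' => Nat.le_trans h h'⟩
  set S := List.insertionSort rel L with hS
  have hperm : List.Perm S L := List.perm_insertionSort rel L
  have hsorted : S.Pairwise rel := List.pairwise_insertionSort rel L
  have hSb : ∀ p ∈ S, 0 ≤ p.1 := fun p _ => Nat.zero_le _
  set g := PNF.fromAbs 0 S with hg
  have htf : PNF.toabs 0 g = S := PNF.toabs_fromAbs S 0 hsorted hSb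
  have hglen : g.length = L.length := by
    rw [hg, PNF.length_fromAbs]; exact hperm.length_eq
  have hgne : g ≠ [] := by
    intro h
    apply hne
    have := hglen
    rw [h] at this
    exact List.length_eq_zero_iff.1 this.symm
  refine ⟨PNF.build g, PNF.isPattern_build g hgne, ?_, ?_⟩
  · rw [PNF.size_build g hgne]
    have hsum : ((g.map Prod.fst).sum) ≤ M - 0 := by
      refine PNF.sum_fromAbs S 0 M hsorted (fun p hp => ⟨Nat.zero_le _, ?_⟩) (Nat.zero_le _)
      exact hM p (hperm.mem_iff.1 hp)
    have hlen1 : 1 ≤ L.length := List.length_pos_iff.2 hne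
    rw [hglen]
    omega
  · intro w _
    rw [hequiv, PNF.sat_build g hgne, htf]
    constructor
    · intro h p hp; exact h p (hperm.mem_iff.1 hp)
    · intro h p hp; exact h p (hperm.mem_iff.2 hp)
end

section
/- For every formula φ ∈ LTL(F,∧), either φ is satisfied by no nonempty finite word, or there exist a finite set of non-repeating words w₁,…,w_p and c ∈ Σ ∪ {ε} such that for every nonempty finite word z: z satisfies φ if and only if w_q is a subword of z for every q ∈ [1,p], and z starts with c (the latter condition being vacuous when c = ε). -/
attribute [local instance] Classical.propDecidable

namespace FAhelp
variable {σ : Type}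

lemma drop_mono (z : List σ) {i j : ℕ} (h : i ≤ j) : List.Sublist (z.drop j) (z.drop i) := by
  have e : z.drop j = (z.drop i).drop (j - i) := by
    rw [List.drop_drop, Nat.add_sub_cancel' h]
  rw [e]; exact List.drop_sublist _ _

lemma drop_eq_cons {z : List σ} {i : ℕ} {a : σ} (h : (z.drop i).head? = some a) :
    z.drop i = a :: z.drop (i+1) := by
  cases hd : z.drop i with
  | nil => rw [hd] at h; simp at h
  | cons b t =>
    rw [hd] at h
    simp only [List.head?_cons, Option.some.injEq] at h
    subst h
    have ht : t = z.drop (i+1) := by rw [← List.tail_drop, hd]; rfl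
    rw [ht]

lemma drop_lt {z : List σ} {i : ℕ} {a : σ} (h : (z.drop i).head? = some a) : i < z.length := by
  by_contra hle
  push_neg at hle
  rw [List.drop_eq_nil_of_le hle] at h
  simp at h

lemma drop_ne_nil {z : List σ} {i : ℕ} (h : i < z.length) : z.drop i ≠ [] := by
  intro hn
  have := List.drop_eq_nil_iff.mp hn
  omega

lemma occ {a : σ} : ∀ {z w : List σ}, List.Sublist (a::w) z →
    ∃ i, (z.drop i).head? = some a ∧ List.Sublist w (z.drop (i+1)) := by
  intro z
  induction z with
  | nil => intro w h; exact absurd h (by simp)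
  | cons b t ih =>
    intro w h
    cases h with
    | cons _ h' =>
      obtain ⟨i, hh, hs⟩ := ih h'
      exact ⟨i+1, hh, hs⟩
    | cons_cons _ h' => exact ⟨0, by simp, by simpa using h'⟩

lemma ev_char_some (a : σ) (ws : List (List σ)) (z : List σ) :
    (∃ i < z.length, (∀ w ∈ ws, List.Sublist w (z.drop i)) ∧ (z.drop i).head? = some a)
    ↔ ∀ w ∈ [a] :: ws.map (fun w => if w.head? = some a then w else a::w),
        List.Sublist w z := by
  constructor
  · rintro ⟨i, _, hsub, hhead⟩
    intro w hw
    have hdz : List.Sublist (z.drop i) z := List.drop_sublist _ _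
    rcases List.mem_cons.mp hw with rfl | hw
    · have hma : a ∈ z.drop i := by rw [drop_eq_cons hhead]; exact List.mem_cons_self
      exact List.Sublist.trans (List.singleton_sublist.mpr hma) hdz
    · obtain ⟨v, hv, rfl⟩ := List.mem_map.mp hw
      by_cases hva : v.head? = some a
      · rw [if_pos hva]; exact (hsub v hv).trans hdz
      · rw [if_neg hva]
        have hvd := hsub v hv
        rw [drop_eq_cons hhead] at hvd hdz
        cases hvd with
        | cons _ h' => exact (h'.cons₂ a).trans hdz
        | cons_cons _ h' => simp at hva
  · intro hall
    have ha1 : List.Sublist [a] z := hall [a] (List.mem_cons_self)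
    obtain ⟨i0, hh0, -⟩ := occ ha1
    have hex : ∃ i, (z.drop i).head? = some a := ⟨i0, hh0⟩
    have hhead : (z.drop (Nat.find hex)).head? = some a := Nat.find_spec hex
    refine ⟨Nat.find hex, drop_lt hhead, ?_, hhead⟩
    intro w hw
    have hfw := hall _ (List.mem_cons_of_mem _ (List.mem_map_of_mem hw))
    by_cases hwa : w.head? = some a
    · rw [if_pos hwa] at hfw
      cases w with
      | nil => simp at hwa
      | cons b t =>
        simp only [List.head?_cons, Option.some.injEq] at hwa
        subst hwa
        obtain ⟨j, hj, hjs⟩ := occ hfw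
        have hij : Nat.find hex ≤ j := Nat.find_min' hex hj
        have hbt : List.Sublist (b::t) (z.drop j) := by
          rw [drop_eq_cons hj]; exact hjs.cons₂ b
        exact hbt.trans (drop_mono z hij)
    · rw [if_neg hwa] at hfw
      obtain ⟨j, hj, hjs⟩ := occ hfw
      have hij : Nat.find hex ≤ j + 1 := le_trans (Nat.find_min' hex hj) (Nat.le_succ j)
      exact hjs.trans (drop_mono z hij)

end FAhelp

/-- characterisation of the expressive power of `LTL(F,∧)`.
Here `u.Sublist z` expresses that `u` is a subword of `z` (strictly increasing positions),
`List.Chain' (· ≠ ·)` expresses that a word is non-repeating, and `c : Option σ` encodes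
an element of `Σ ∪ {ε}`. -/
theorem F_and_fragment_characterisation {σ : Type} (φ : LTL σ)
    (h1 : φ.usesOnly {LTL.Op.F, LTL.Op.And}) (h2 : φ.constFree) :
    (∀ z : List σ, z ≠ [] → ¬ φ.sat z) ∨
    ∃ (ws : List (List σ)) (c : Option σ),
      (∀ w ∈ ws, w.Chain' (· ≠ ·)) ∧
      (∀ z : List σ, z ≠ [] →
        (φ.sat z ↔
          ((∀ w ∈ ws, w.Sublist z) ∧ ∀ a : σ, c = some a → z.head? = some a))) := by
  classical
  induction φ with
  | top =>
    right
    exact ⟨[], none, by simp, fun z hz => by simp [LTL.sat]⟩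
  | bot =>
    left
    intro z _ h
    simpa [LTL.sat] using h
  | atom c =>
    right
    refine ⟨[], some c, by simp, fun z hz => ?_⟩
    simp only [LTL.sat]
    constructor
    · intro hs
      exact ⟨by simp, fun x hx => by cases hx; exact hs⟩
    · rintro ⟨-, hd⟩
      exact hd c rfl
  | natom c => simp [LTL.usesOnly] at h1
  | disj φ ψ ih1 ih2 => simp [LTL.usesOnly] at h1
  | next φ ih => simp [LTL.usesOnly] at h1
  | glob φ ih => simp [LTL.usesOnly] at h1
  | untl φ ψ ih1 ih2 => simp [LTL.usesOnly] at h1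
  | conj φ ψ ih1 ih2 =>
    obtain ⟨-, hu1, hu2⟩ := h1
    obtain ⟨hc1, hc2⟩ := h2
    rcases ih1 hu1 hc1 with hbad | ⟨ws1, c1, hch1, hiff1⟩
    · left; intro z hz hs; exact hbad z hz hs.1
    rcases ih2 hu2 hc2 with hbad | ⟨ws2, c2, hch2, hiff2⟩
    · left; intro z hz hs; exact hbad z hz hs.2
    by_cases hagree : ∀ x y : σ, c1 = some x → c2 = some y → x = y
    · have key : ∃ c3 : Option σ, ∀ z : List σ,
          (((∀ x, c1 = some x → z.head? = some x) ∧
            (∀ x, c2 = some x → z.head? = some x)) ↔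
           (∀ x, c3 = some x → z.head? = some x)) := by
        cases c1 with
        | none => exact ⟨c2, fun z => by simp⟩
        | some x =>
          cases c2 with
          | none => exact ⟨some x, fun z => by simp⟩
          | some y =>
            have hxy : x = y := hagree x y rfl rfl
            subst hxy
            exact ⟨some x, fun z => by simp⟩
      obtain ⟨c3, hc3⟩ := key
      right
      refine ⟨ws1 ++ ws2, c3, ?_, fun z hz => ?_⟩
      · intro w hw
        rcases List.mem_append.mp hw with h | h
        exacts [hch1 w h, hch2 w h]
      · have : (LTL.conj φ ψ).sat z ↔ φ.sat z ∧ ψ.sat z := Iff.rfl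
        rw [this, hiff1 z hz, hiff2 z hz, ← hc3 z, List.forall_mem_append]
        tauto
    · push_neg at hagree
      obtain ⟨x, y, hx, hy, hne⟩ := hagree
      left
      intro z hz hs
      have h1' := ((hiff1 z hz).mp hs.1).2 x hx
      have h2' := ((hiff2 z hz).mp hs.2).2 y hy
      rw [h1'] at h2'
      exact hne (Option.some_injective _ h2'.symm).symm
  | ev φ ih =>
    obtain ⟨-, hu⟩ := h1
    rcases ih hu h2 with hbad | ⟨ws, c, hch, hiff⟩
    · left
      intro z hz hs
      obtain ⟨i, hi, hsi⟩ := hs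
      exact hbad _ (FAhelp.drop_ne_nil hi) hsi
    cases c with
    | none =>
      right
      refine ⟨ws, none, hch, fun z hz => ?_⟩
      constructor
      · rintro ⟨i, hi, hsi⟩
        obtain ⟨hs, -⟩ := (hiff _ (FAhelp.drop_ne_nil hi)).mp hsi
        exact ⟨fun w hw => (hs w hw).trans (List.drop_sublist _ _), by simp⟩
      · rintro ⟨hs, -⟩
        exact ⟨0, List.length_pos_iff.mpr hz, (hiff z hz).mpr ⟨hs, by simp⟩⟩
    | some a =>
      right
      refine ⟨[a] :: ws.map (fun w => if w.head? = some a then w else a::w), none,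
        ?_, fun z hz => ?_⟩
      · intro w hw
        rcases List.mem_cons.mp hw with rfl | hw
        · exact List.isChain_singleton a
        · obtain ⟨v, hv, rfl⟩ := List.mem_map.mp hw
          by_cases hva : v.head? = some a
          · rw [if_pos hva]; exact hch v hv
          · rw [if_neg hva]
            show List.IsChain _ (a :: v); rw [List.isChain_cons]
            refine ⟨fun y hy hay => hva ?_, hch v hv⟩
            rw [Option.mem_def] at hy
            rw [hy, hay]
      · constructor
        · rintro ⟨i, hi, hsi⟩
          obtain ⟨hs, hd⟩ := (hiff _ (FAhelp.drop_ne_nil hi)).mp hsi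
          exact ⟨(FAhelp.ev_char_some a ws z).mp ⟨i, hi, hs, hd a rfl⟩, by simp⟩
        · rintro ⟨hA, -⟩
          obtain ⟨i, hi, hs, hd⟩ := (FAhelp.ev_char_some a ws z).mpr hA
          exact ⟨i, hi, (hiff _ (FAhelp.drop_ne_nil hi)).mpr
            ⟨hs, fun x hx => by cases hx; exact hd⟩⟩
end

section
/- Let C₁,…,C_n be subsets of [1,m] and k ∈ ℕ with k ≥ 1. Over the alphabet [0,m], let u = 0 1 2 ⋯ m, and for each j ∈ [1,n], writing [1,m] ∖ C_j = {a_{j,1} < ⋯ < a_{j,m_j}}, let v_j = 0 a_{j,1} ⋯ a_{j,m_j}. Then there exists a hitting set H ⊆ [1,m] of C₁,…,C_n of size at most k if and only if there exists an LTL(F,∧) formula of size at most 3k − 1 separating {u} from {v₁,…,v_n}. -/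
namespace HS
open List

set_option linter.unusedSectionVars false

variable {α : Type} [LinearOrder α]

/-! ### list helpers -/

lemma mem_of_head?' {l : List α} {a : α} (h : l.head? = some a) : a ∈ l := by
  cases l with
  | nil => simp at h
  | cons x t => simp at h; subst h; exact mem_cons_self

lemma ne_nil_of_head?' {l : List α} {a : α} (h : l.head? = some a) : l ≠ [] := by
  cases l <;> simp_all

lemma eq_drop_of_suffix {s l : List α} (h : s <:+ l) :
    s = l.drop (l.length - s.length) := by
  obtain ⟨p, rfl⟩ := h
  simp [List.drop_left]

lemma drop_suffix_drop (l : List α) {a b : ℕ} (hab : a ≤ b) :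
    l.drop b <:+ l.drop a := by
  have : l.drop b = (l.drop a).drop (b - a) := by
    rw [List.drop_drop, Nat.add_sub_cancel' hab]
  rw [this]; exact drop_suffix _ _

lemma suffix_comparable {l s₁ s₂ : List α} (h1 : s₁ <:+ l) (h2 : s₂ <:+ l) :
    s₁ <:+ s₂ ∨ s₂ <:+ s₁ := by
  rcases le_total s₁.length s₂.length with h | h
  · left
    rw [eq_drop_of_suffix h1, eq_drop_of_suffix h2]
    exact drop_suffix_drop _ (by omega)
  · right
    rw [eq_drop_of_suffix h1, eq_drop_of_suffix h2]
    exact drop_suffix_drop _ (by omega)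

lemma head_le_of_mem {l : List α} {c a : α} (hs : l.Pairwise (· < ·))
    (hh : l.head? = some c) (ha : a ∈ l) : c ≤ a := by
  cases l with
  | nil => simp at hh
  | cons x t =>
    simp at hh; subst hh
    rcases mem_cons.mp ha with rfl | h
    · exact le_refl _
    · exact ((List.pairwise_cons.mp hs).1 a h).le

lemma suffix_eq_of_head {s₁ s₂ : List α} {c : α} (hs : s₁.Pairwise (· < ·))
    (h2 : s₂ <:+ s₁) (hh1 : s₁.head? = some c) (hh2 : s₂.head? = some c) :
    s₁ = s₂ := by
  obtain ⟨p, rfl⟩ := h2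
  cases p with
  | nil => simp
  | cons x xs =>
    exfalso
    rw [cons_append] at hs hh1
    rw [head?_cons] at hh1
    have hx : x = c := by injection hh1
    have hc : c ∈ xs ++ s₂ := mem_append_right _ (mem_of_head?' hh2)
    have hlt : x < c := (List.pairwise_cons.mp hs).1 c hc
    rw [hx] at hlt
    exact lt_irrefl c hlt

lemma exists_suffix_head {l : List α} {a : α} (ha : a ∈ l) :
    ∃ s, s <:+ l ∧ s.head? = some a := by
  induction l with
  | nil => simp at ha
  | cons x t ih =>
    rcases mem_cons.mp ha with h | h
    · exact ⟨x :: t, suffix_refl _, by simp [h]⟩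
    · obtain ⟨s, hs, hh⟩ := ih h
      exact ⟨s, hs.trans (suffix_cons x t), hh⟩

end HS

namespace HS2
open List LTL HS

set_option linter.unusedSectionVars false

variable {α : Type} [LinearOrder α]

abbrev FA : Set LTL.Op := {LTL.Op.F, LTL.Op.And}

lemma not_X : LTL.Op.X ∉ FA := by rintro (h | h) <;> exact LTL.Op.noConfusion h
lemma not_G : LTL.Op.G ∉ FA := by rintro (h | h) <;> exact LTL.Op.noConfusion h
lemma not_U : LTL.Op.U ∉ FA := by rintro (h | h) <;> exact LTL.Op.noConfusion h
lemma not_Or : LTL.Op.Or ∉ FA := by rintro (h | h) <;> exact LTL.Op.noConfusion h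
lemma not_Not : LTL.Op.Not ∉ FA := by rintro (h | h) <;> exact LTL.Op.noConfusion h

/-- the set of atoms occurring in a formula -/
def atoms : LTL α → Finset α
  | .top => ∅
  | .bot => ∅
  | .atom a => {a}
  | .natom a => {a}
  | .conj φ ψ => atoms φ ∪ atoms ψ
  | .disj φ ψ => atoms φ ∪ atoms ψ
  | .next φ => atoms φ
  | .ev φ => atoms φ
  | .glob φ => atoms φ
  | .untl φ ψ => atoms φ ∪ atoms ψ

/-- atoms occurring at the top, not under any temporal operator -/
def topAtoms : LTL α → Finset α
  | .atom a => {a}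
  | .conj φ ψ => topAtoms φ ∪ topAtoms ψ
  | _ => ∅

lemma sat_ev_of_suffix {ψ : LTL α} {t w : List α} (h : t <:+ w) (hne : t ≠ [])
    (hs : sat ψ t) : sat (.ev ψ) w := by
  obtain ⟨p, rfl⟩ := h
  refine ⟨p.length, ?_, ?_⟩
  · simp only [List.length_append]
    have := List.length_pos_iff.mpr hne
    omega
  · rw [List.drop_left]; exact hs

lemma ev_suffix_mono {ψ : LTL α} {t w : List α} (hs : sat (.ev ψ) t) (h : t <:+ w) :
    sat (.ev ψ) w := by
  obtain ⟨i, hi, hsat⟩ := hs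
  refine sat_ev_of_suffix ((drop_suffix i t).trans h) ?_ hsat
  have : (t.drop i).length = t.length - i := by simp
  intro hnil
  rw [hnil] at this
  simp at this
  omega

/-- satisfaction of formulas with no top-level atom is preserved by extending to a superword
on the left (i.e. moving to a list having the given list as suffix). -/
lemma sat_suffix_mono : ∀ (φ : LTL α), φ.usesOnly FA → φ.constFree → topAtoms φ = ∅ →
    ∀ {s s' : List α}, sat φ s → s <:+ s' → sat φ s' := by
  intro φ
  induction φ with
  | top => intro _ hC; exact absurd hC not_false
  | bot => intro _ _ _ _ _ h _; exact h.elim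
  | atom a => intro _ _ hT; simp [topAtoms] at hT
  | natom a => intro hG; exact absurd hG not_Not
  | conj φ ψ ih1 ih2 =>
    intro hG hC hT s s' hsat hsuf
    simp only [topAtoms, Finset.union_eq_empty] at hT
    exact ⟨ih1 hG.2.1 hC.1 hT.1 hsat.1 hsuf, ih2 hG.2.2 hC.2 hT.2 hsat.2 hsuf⟩
  | disj φ ψ _ _ => intro hG; exact absurd hG.1 not_Or
  | next φ _ => intro hG; exact absurd hG.1 not_X
  | ev φ _ =>
    intro _ _ _ s s' hsat hsuf
    exact ev_suffix_mono hsat hsuf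
  | glob φ _ => intro hG; exact absurd hG.1 not_G
  | untl φ ψ _ _ => intro hG; exact absurd hG.1 not_U

/-- a top-level atom forces the head of any satisfying word -/
lemma force : ∀ (φ : LTL α) {a : α} {w : List α}, a ∈ topAtoms φ → sat φ w →
    w.head? = some a := by
  intro φ
  induction φ with
  | atom b =>
    intro a w ha hsat
    simp [topAtoms] at ha
    subst ha
    exact hsat
  | conj φ ψ ih1 ih2 =>
    intro a w ha hsat
    simp only [topAtoms, Finset.mem_union] at ha
    rcases ha with h | h
    · exact ih1 h hsat.1
    · exact ih2 h hsat.2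
  | _ =>
    intro a w ha _ <;> simp [topAtoms] at ha

/-- Lift satisfaction from a suffix to a sorted superword, provided any top-level atom
is the head of the superword. -/
lemma lift (φ : LTL α) (hG : φ.usesOnly FA) (hC : φ.constFree) {s₁ s₂ : List α}
    (hs : s₁.Pairwise (· < ·)) (h2 : s₂ <:+ s₁) (hsat : sat φ s₂)
    (htop : ∀ a ∈ topAtoms φ, s₁.head? = some a) : sat φ s₁ := by
  rcases Finset.eq_empty_or_nonempty (topAtoms φ) with hT | ⟨a, ha⟩
  · exact sat_suffix_mono φ hG hC hT hsat h2
  · have hh2 : s₂.head? = some a := force φ ha hsat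
    have hh1 : s₁.head? = some a := htop a ha
    rw [suffix_eq_of_head hs h2 hh1 hh2]
    exact hsat

/-- counting lemma: a satisfiable `LTL(F,∧)` const-free formula has few distinct atoms. -/
lemma count : ∀ (φ : LTL α), φ.usesOnly FA → φ.constFree → ∀ {w : List α} {c : α},
    sat φ w → w.head? = some c →
    3 * (atoms φ).card ≤ φ.size + (if c ∈ atoms φ then 2 else 1) := by
  intro φ
  induction φ with
  | top => intro _ hC; exact absurd hC not_false
  | bot => intro _ _ _ _ h; exact h.elim
  | atom a =>
    intro _ _ w c hsat hh
    rw [hsat] at hh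
    injection hh with hh
    subst hh
    simp [atoms, size]
  | natom a => intro hG; exact absurd hG not_Not
  | conj φ ψ ih1 ih2 =>
    intro hG hC w c hsat hh
    have h1 := ih1 hG.2.1 hC.1 hsat.1 hh
    have h2 := ih2 hG.2.2 hC.2 hsat.2 hh
    have hcu : atoms (φ.conj ψ) = atoms φ ∪ atoms ψ := rfl
    have hsz : (φ.conj ψ).size = φ.size + ψ.size + 1 := rfl
    have hle := Finset.card_union_le (atoms φ) (atoms ψ)
    rw [hcu, hsz]
    by_cases hA : c ∈ atoms φ <;> by_cases hB : c ∈ atoms ψ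
    · have hint : 1 ≤ ((atoms φ) ∩ (atoms ψ)).card :=
        Finset.card_pos.mpr ⟨c, Finset.mem_inter.mpr ⟨hA, hB⟩⟩
      have heq := Finset.card_union_add_card_inter (atoms φ) (atoms ψ)
      rw [if_pos hA] at h1; rw [if_pos hB] at h2
      rw [if_pos (Finset.mem_union.mpr (Or.inl hA))]
      omega
    · rw [if_pos hA] at h1; rw [if_neg hB] at h2
      rw [if_pos (Finset.mem_union.mpr (Or.inl hA))]
      omega
    · rw [if_neg hA] at h1; rw [if_pos hB] at h2
      rw [if_pos (Finset.mem_union.mpr (Or.inr hB))]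
      omega
    · rw [if_neg hA] at h1; rw [if_neg hB] at h2
      rw [if_neg (fun h => (Finset.mem_union.mp h).elim hA hB)]
      omega
  | disj φ ψ _ _ => intro hG; exact absurd hG.1 not_Or
  | next φ _ => intro hG; exact absurd hG.1 not_X
  | ev φ ih =>
    intro hG hC w c hsat hh
    obtain ⟨i, hi, hsat'⟩ := hsat
    have hne : w.drop i ≠ [] := by
      intro h
      have : (w.drop i).length = w.length - i := by simp
      rw [h] at this; simp at this; omega
    obtain ⟨x, t, hxt⟩ := List.exists_cons_of_ne_nil hne
    have hh' : (w.drop i).head? = some x := by rw [hxt]; rfl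
    have h1 := ih hG.2 hC hsat' hh'
    have hcu : atoms (φ.ev) = atoms φ := rfl
    have hsz : (φ.ev).size = φ.size + 1 := rfl
    rw [hcu, hsz]
    split_ifs at h1 ⊢ <;> omega
  | glob φ _ => intro hG; exact absurd hG.1 not_G
  | untl φ ψ _ _ => intro hG; exact absurd hG.1 not_U

/-- transfer lemma: satisfaction on a sorted word transfers to a suffix of any sorted
word containing all atoms, with head at least as large. -/
lemma transfer : ∀ (φ : LTL α), φ.usesOnly FA → φ.constFree → ∀ {w w' : List α},
    w.Pairwise (· < ·) → w'.Pairwise (· < ·) → sat φ w → (∀ a ∈ atoms φ, a ∈ w') →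
    ∃ s, s <:+ w' ∧ s ≠ [] ∧ sat φ s ∧
      ∀ c d, w.head? = some c → s.head? = some d → c ≤ d := by
  intro φ
  induction φ with
  | top => intro _ hC; exact absurd hC not_false
  | bot => intro _ _ _ _ _ _ h; exact h.elim
  | atom a =>
    intro _ _ w w' hw hw' hsat hmem
    obtain ⟨s, hsuf, hh⟩ := exists_suffix_head (hmem a (by simp [atoms]))
    refine ⟨s, hsuf, ne_nil_of_head?' hh, hh, ?_⟩
    intro c d hc hd
    rw [hsat] at hc; injection hc with hc
    rw [hh] at hd; injection hd with hd
    subst hc; subst hd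
    exact le_refl _
  | natom a => intro hG; exact absurd hG not_Not
  | conj φ ψ ih1 ih2 =>
    intro hG hC w w' hw hw' hsat hmem
    obtain ⟨s₁, hsf1, hne1, hst1, hb1⟩ := ih1 hG.2.1 hC.1 hw hw' hsat.1
      (fun a ha => hmem a (Finset.mem_union.mpr (Or.inl ha)))
    obtain ⟨s₂, hsf2, hne2, hst2, hb2⟩ := ih2 hG.2.2 hC.2 hw hw' hsat.2
      (fun a ha => hmem a (Finset.mem_union.mpr (Or.inr ha)))
    rcases suffix_comparable hsf1 hsf2 with h12 | h21
    · -- s₁ <:+ s₂  : lift φ to s₂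
      have hsort2 : s₂.Pairwise (· < ·) := hw'.sublist hsf2.sublist
      have hφ : sat φ s₂ := by
        refine lift φ hG.2.1 hC.1 hsort2 h12 hst1 ?_
        intro a ha
        have hwa : w.head? = some a := force φ ha hsat.1
        obtain ⟨d, t, hdt⟩ := List.exists_cons_of_ne_nil hne2
        have hd : s₂.head? = some d := by rw [hdt]; rfl
        have had : a ≤ d := hb2 a d hwa hd
        have hh1 : s₁.head? = some a := force φ ha hst1
        have hda : d ≤ a := head_le_of_mem hsort2 hd (h12.sublist.subset (mem_of_head?' hh1))
        rw [hd, le_antisymm hda had]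
      exact ⟨s₂, hsf2, hne2, ⟨hφ, hst2⟩, hb2⟩
    · -- s₂ <:+ s₁ : lift ψ to s₁
      have hsort1 : s₁.Pairwise (· < ·) := hw'.sublist hsf1.sublist
      have hψ : sat ψ s₁ := by
        refine lift ψ hG.2.2 hC.2 hsort1 h21 hst2 ?_
        intro a ha
        have hwa : w.head? = some a := force ψ ha hsat.2
        obtain ⟨d, t, hdt⟩ := List.exists_cons_of_ne_nil hne1
        have hd : s₁.head? = some d := by rw [hdt]; rfl
        have had : a ≤ d := hb1 a d hwa hd
        have hh2 : s₂.head? = some a := force ψ ha hst2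
        have hda : d ≤ a := head_le_of_mem hsort1 hd (h21.sublist.subset (mem_of_head?' hh2))
        rw [hd, le_antisymm hda had]
      exact ⟨s₁, hsf1, hne1, ⟨hst1, hψ⟩, hb1⟩
  | disj φ ψ _ _ => intro hG; exact absurd hG.1 not_Or
  | next φ _ => intro hG; exact absurd hG.1 not_X
  | ev φ ih =>
    intro hG hC w w' hw hw' hsat hmem
    obtain ⟨i, hi, hsat'⟩ := hsat
    have hwi : (w.drop i).Pairwise (· < ·) := hw.sublist (drop_suffix i w).sublist
    obtain ⟨s, hsuf, hne, hst, hb⟩ := ih hG.2 hC hwi hw' hsat' hmem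
    refine ⟨s, hsuf, hne, ⟨0, List.length_pos_iff.mpr hne, by simpa using hst⟩, ?_⟩
    intro c d hc hd
    have hnei : w.drop i ≠ [] := by
      intro h
      have : (w.drop i).length = w.length - i := by simp
      rw [h] at this; simp at this; omega
    obtain ⟨e, t, het⟩ := List.exists_cons_of_ne_nil hnei
    have he : (w.drop i).head? = some e := by rw [het]; rfl
    have hce : c ≤ e :=
      head_le_of_mem hw hc ((drop_suffix i w).sublist.subset (mem_of_head?' he))
    exact hce.trans (hb e d he hd)
  | glob φ _ => intro hG; exact absurd hG.1 not_G
  | untl φ ψ _ _ => intro hG; exact absurd hG.1 not_U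

/-! ### chain formulas for the forward direction -/

def chain : α → List α → LTL α
  | a, [] => .ev (.atom a)
  | a, b :: l => .ev (.conj (.atom a) (chain b l))

lemma chain_ev : ∀ (l : List α) (a : α), ∃ ψ, chain a l = .ev ψ := by
  intro l a; cases l <;> exact ⟨_, rfl⟩

lemma chain_uses : ∀ (l : List α) (a : α), (chain a l).usesOnly FA := by
  intro l
  induction l with
  | nil => intro a; exact ⟨Or.inl rfl, trivial⟩
  | cons b l ih => intro a; exact ⟨Or.inl rfl, Or.inr rfl, trivial, ih b⟩

lemma chain_constFree : ∀ (l : List α) (a : α), (chain a l).constFree := by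
  intro l
  induction l with
  | nil => intro a; trivial
  | cons b l ih => intro a; exact ⟨trivial, ih b⟩

lemma chain_size : ∀ (l : List α) (a : α), (chain a l).size = 3 * l.length + 2 := by
  intro l
  induction l with
  | nil => intro a; rfl
  | cons b l ih =>
    intro a
    show (LTL.atom a).size + (chain b l).size + 1 + 1 = _
    rw [ih b]
    simp [LTL.size]
    omega

lemma chain_sat_mem : ∀ (l : List α) (a : α) (w : List α), sat (chain a l) w →
    ∀ x ∈ a :: l, x ∈ w := by
  intro l
  induction l with
  | nil =>
    intro a w hsat x hx
    obtain ⟨i, hi, h⟩ := hsat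
    rcases List.mem_cons.mp hx with rfl | h'
    · exact (drop_suffix i w).sublist.subset (mem_of_head?' h)
    · simp at h'
  | cons b l ih =>
    intro a w hsat x hx
    obtain ⟨i, hi, hH, hch⟩ := hsat
    rcases List.mem_cons.mp hx with rfl | h'
    · exact (drop_suffix i w).sublist.subset (mem_of_head?' hH)
    · exact (drop_suffix i w).sublist.subset (ih b (w.drop i) hch x h')
/-! ### facts about the word u over Fin (m+1) -/

variable {m : ℕ}

lemma u_sorted : (List.ofFn (fun i : Fin (m + 1) => i)).Pairwise (· < ·) :=
  List.pairwise_ofFn.mpr (fun _ _ h => h)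

lemma u_head_drop (a : Fin (m + 1)) :
    ((List.ofFn (fun i : Fin (m + 1) => i)).drop a.val).head? = some a := by
  rw [List.head?_drop]
  rw [List.getElem?_eq_getElem (by simp [a.isLt])]
  rw [List.getElem_ofFn]

lemma u_head : (List.ofFn (fun i : Fin (m + 1) => i)).head? = some 0 := by
  simpa using u_head_drop (0 : Fin (m + 1))

lemma chain_sat_u : ∀ (l : List (Fin (m + 1))) (a : Fin (m + 1)),
    (a :: l).Pairwise (· < ·) →
    sat (chain a l) ((List.ofFn (fun i : Fin (m + 1) => i)).drop a.val) := by
  intro l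
  induction l with
  | nil =>
    intro a _
    refine ⟨0, ?_, ?_⟩
    · have := a.isLt
      simp only [List.length_drop, List.length_ofFn]
      omega
    · show ((((List.ofFn (fun i : Fin (m + 1) => i)).drop a.val)).drop 0).head? = some a
      rw [List.drop_zero]
      exact u_head_drop a
  | cons b l ih =>
    intro a hs
    obtain ⟨hlt, hs'⟩ := List.pairwise_cons.mp hs
    have hab : a < b := hlt b (List.mem_cons_self)
    have hsb := ih b hs'
    have hsuf : (List.ofFn (fun i : Fin (m + 1) => i)).drop b.val <:+
        (List.ofFn (fun i : Fin (m + 1) => i)).drop a.val :=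
      drop_suffix_drop _ (by exact_mod_cast hab.le)
    obtain ⟨ψ, hψ⟩ := chain_ev l b
    have hlift : sat (chain b l) ((List.ofFn (fun i : Fin (m + 1) => i)).drop a.val) := by
      rw [hψ] at hsb ⊢
      exact ev_suffix_mono hsb hsuf
    refine ⟨0, ?_, ?_⟩
    · have := a.isLt
      simp only [List.length_drop, List.length_ofFn]
      omega
    · rw [List.drop_zero]
      exact ⟨u_head_drop a, hlift⟩
end HS2

/-- reduction from hitting set to `LTL(F,∧)` learning over the alphabet
`[0,m]`, modelled as `Fin (m+1)`. The ground set `[1,m]` is modelled as `Fin m`, with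
`i : Fin m` standing for the element `i+1`, embedded in the alphabet via `Fin.succ`.
The word `v_j` lists `0` followed by the elements of `[1,m] ∖ C_j` in increasing order. -/
theorem hitting_set_iff_small_F_and_formula (m n k : ℕ) (hk : 1 ≤ k)
    (C : Fin n → Finset (Fin m)) :
    (∃ H : Finset (Fin m), H.card ≤ k ∧ ∀ j : Fin n, ∃ i ∈ H, i ∈ C j) ↔
    (∃ φ : LTL (Fin (m + 1)),
      φ.usesOnly {LTL.Op.F, LTL.Op.And} ∧ φ.constFree ∧
      φ.size ≤ 3 * k - 1 ∧
      φ.sat (List.ofFn (fun i : Fin (m + 1) => i)) ∧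
      ∀ j : Fin n, ¬ φ.sat ((0 : Fin (m + 1)) ::
        (((Finset.univ \ C j).sort (· ≤ ·)).map Fin.succ))) := by
  constructor
  · rintro ⟨H, hcard, hhit⟩
    rcases H.eq_empty_or_nonempty with rfl | hne
    · refine ⟨.ev (.atom 0), ⟨Or.inl rfl, trivial⟩, trivial, ?_, ?_, ?_⟩
      · show (2 : ℕ) ≤ 3 * k - 1
        omega
      · refine ⟨0, by simp, ?_⟩
        show ((List.ofFn (fun i : Fin (m + 1) => i)).drop 0).head? = some 0
        rw [List.drop_zero]
        exact HS2.u_head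
      · intro j _
        obtain ⟨i, hi, _⟩ := hhit j
        exact absurd hi (Finset.notMem_empty i)
    · set L := (Finset.sort H (· ≤ ·)).map Fin.succ with hL
      have hlen : L.length = H.card := by simp [hL]
      have hpos : 0 < H.card := Finset.card_pos.mpr hne
      have hLne : L ≠ [] := by
        intro h; rw [h] at hlen; simp at hlen; omega
      obtain ⟨a, l, hal⟩ := List.exists_cons_of_ne_nil hLne
      have hsort : (a :: l).Pairwise (· < ·) := by
        rw [← hal, hL]
        exact List.pairwise_map.mpr
          ((Finset.sortedLT_sort H).pairwise.imp (fun h => Fin.succ_lt_succ_iff.mpr h))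
      refine ⟨HS2.chain a l, HS2.chain_uses l a, HS2.chain_constFree l a, ?_, ?_, ?_⟩
      · rw [HS2.chain_size]
        have : l.length + 1 = H.card := by rw [← hlen, hal]; simp
        omega
      · obtain ⟨ψ, hψ⟩ := HS2.chain_ev l a
        have h1 := HS2.chain_sat_u l a hsort
        rw [hψ] at h1 ⊢
        exact HS2.ev_suffix_mono h1 (List.drop_suffix _ _)
      · intro j hsat
        obtain ⟨i, hiH, hiC⟩ := hhit j
        have hmem := HS2.chain_sat_mem l a _ hsat i.succ
          (by rw [← hal, hL]; exact List.mem_map_of_mem ((Finset.mem_sort _).mpr hiH))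
        rcases List.mem_cons.mp hmem with h0 | hmem'
        · exact Fin.succ_ne_zero i h0
        · obtain ⟨i', hi', heq⟩ := List.mem_map.mp hmem'
          have hii : i' = i := Fin.succ_injective _ heq
          subst hii
          have := (Finset.mem_sort (α := Fin m) (· ≤ ·)).mp hi'
          rw [Finset.mem_sdiff] at this
          exact this.2 hiC
  · rintro ⟨φ, hG, hC, hsize, hu, hneg⟩
    classical
    refine ⟨Finset.univ.filter (fun i : Fin m => i.succ ∈ HS2.atoms φ), ?_, ?_⟩
    · have himg : (Finset.univ.filter (fun i : Fin m => i.succ ∈ HS2.atoms φ)).image Fin.succ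
          = (HS2.atoms φ).erase 0 := by
        ext x
        simp only [Finset.mem_image, Finset.mem_filter, Finset.mem_univ, true_and,
          Finset.mem_erase]
        constructor
        · rintro ⟨i, hiA, rfl⟩; exact ⟨Fin.succ_ne_zero i, hiA⟩
        · rintro ⟨hx0, hxA⟩
          obtain ⟨i, rfl⟩ := Fin.exists_succ_eq.mpr hx0
          exact ⟨i, hxA, rfl⟩
      have hcard : (Finset.univ.filter (fun i : Fin m => i.succ ∈ HS2.atoms φ)).card
          = ((HS2.atoms φ).erase 0).card := by
        rw [← himg, Finset.card_image_of_injective _ (Fin.succ_injective m)]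
      have hcnt := HS2.count φ hG hC hu HS2.u_head
      by_cases h0 : (0 : Fin (m + 1)) ∈ HS2.atoms φ
      · rw [if_pos h0] at hcnt
        rw [hcard, Finset.card_erase_of_mem h0]
        omega
      · rw [if_neg h0] at hcnt
        rw [hcard, Finset.erase_eq_of_notMem h0]
        omega
    · intro j
      set w' := (0 : Fin (m + 1)) :: (((Finset.univ \ C j).sort (· ≤ ·)).map Fin.succ)
        with hw'
      have hw's : w'.Pairwise (· < ·) := by
        rw [hw', List.pairwise_cons]
        constructor
        · intro b hb
          obtain ⟨i', _, rfl⟩ := List.mem_map.mp hb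
          exact Fin.succ_pos i'
        · exact List.pairwise_map.mpr
            ((Finset.sortedLT_sort _).pairwise.imp (fun h => Fin.succ_lt_succ_iff.mpr h))
      by_cases hall : ∀ a ∈ HS2.atoms φ, a ∈ w'
      · exfalso
        obtain ⟨s, hsuf, hne, hsat, _⟩ := HS2.transfer φ hG hC HS2.u_sorted hw's hu hall
        refine hneg j (HS2.lift φ hG hC hw's hsuf hsat ?_)
        intro a ha
        have h1 : (List.ofFn (fun i : Fin (m + 1) => i)).head? = some a :=
          HS2.force φ ha hu
        rw [HS2.u_head] at h1
        injection h1 with h1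
        rw [← h1]
        rfl
      · push_neg at hall
        obtain ⟨x, hxA, hxw⟩ := hall
        have hx0 : x ≠ 0 := by
          rintro rfl
          exact hxw (by rw [hw']; exact List.mem_cons_self)
        obtain ⟨i, rfl⟩ := Fin.exists_succ_eq.mpr hx0
        refine ⟨i, Finset.mem_filter.mpr ⟨Finset.mem_univ i, hxA⟩, ?_⟩
        by_contra hiC
        refine hxw ?_
        rw [hw']
        exact List.mem_cons_of_mem _ (List.mem_map_of_mem
          ((Finset.mem_sort _).mpr (Finset.mem_sdiff.mpr ⟨Finset.mem_univ i, hiC⟩)))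
end
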